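/- (Sharpness of the weighted-average mixture bound.) Let W be an integrable real random variable, let γ_0, …, γ_K ≥ 0 with Σ_{k=0}^{K} γ_k = 1, and fix 0 ≤ l ≤ l' ≤ K with γ̄ := Σ_{k=l}^{l'} γ_k > 0. Then there exist distribution functions F_{W_0}, …, F_{W_K} of integrable real random variables such that F_W(w) = Σ_{k=0}^{K} γ_k · F_{W_k}(w) for all w ∈ ℝ and Σ_{k=l}^{l'} (γ_k/γ̄) · E[W_k] = E[F_W^{-1}(U) | U ≤ γ̄]; in particular, each F_{W_k} may be taken to be the conditional distribution of F_W^{-1}(U) given that U lies in a suitable subinterval of [0,1] of length γ_k, with the intervals for k ∈ {l,…,l'} partitioning [0, γ̄]. -/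

import Mathlib

open MeasureTheory ProbabilityTheory

/-- CDF of a random variable `W` under a measure `μ`. -/
noncomputable def cdfOf {Ω : Type*} [MeasurableSpace Ω] (μ : MeasureTheory.Measure Ω)
    (W : Ω → ℝ) (w : ℝ) : ℝ :=
  (μ {ω | W ω ≤ w}).toReal

/-- Quantile function `F⁻¹(u) = inf {w : F(w) ≥ u}`. -/
noncomputable def quantileFn (F : ℝ → ℝ) (u : ℝ) : ℝ := sInf {w | u ≤ F w}

/-- Lower truncated mean `E[F⁻¹(U) | U ≤ γ]` for `U` uniform on `[0,1]`,
written as `γ⁻¹ ∫_{(0,γ]} F⁻¹(u) du`. -/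
noncomputable def lowerTrunc (F : ℝ → ℝ) (γ : ℝ) : ℝ :=
  γ⁻¹ * ∫ u in Set.Ioc (0 : ℝ) γ, quantileFn F u

/-- Upper truncated mean `E[F⁻¹(U) | U ≥ 1 − γ]` for `U` uniform on `[0,1]`,
written as `γ⁻¹ ∫_{[1−γ,1]} F⁻¹(u) du`. -/
noncomputable def upperTrunc (F : ℝ → ℝ) (γ : ℝ) : ℝ :=
  γ⁻¹ * ∫ u in Set.Ico (1 - γ) (1 : ℝ), quantileFn F u

/-!
If `U` is uniform on `(0, 1]`, then `F⁻¹(U)` has distribution function `F`. Cut `(0, 1]` into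
pieces `A_k` of lengths `γ_k`, the pieces with `k ∈ [l, l']` first, so that together they fill
`(0, γ̄]`. The conditional laws of `F⁻¹(U)` given `U ∈ A_k` then mix back to `F` with weights
`γ_k`, and `γ_k` times the mean of the `k`-th law is `∫_{A_k} F⁻¹`, so the weighted average
over the block is `γ̄⁻¹ ∫_0^γ̄ F⁻¹`.
-/

open Set

section Partition

variable {ι : Type*} [DecidableEq ι]

theorem exists_Ioc_partition (s : Finset ι) (g : ι → ℝ)
    (hg : ∀ i ∈ s, 0 ≤ g i) (c : ℝ) :
    ∃ A : ι → Set ℝ, (∀ i ∈ s, MeasurableSet (A i) ∧ volume (A i) = ENNReal.ofReal (g i)) ∧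
      (s : Set ι).PairwiseDisjoint A ∧ ⋃ i ∈ s, A i = Ioc c (c + ∑ i ∈ s, g i) := by
  induction s using Finset.induction_on with
  | empty => exact ⟨fun _ => ∅, by simp, by simp, by simp⟩
  | insert i s hi ih =>
    obtain ⟨A, hA, hdisj, hunion⟩ := ih fun j hj => hg j (Finset.mem_insert_of_mem hj)
    have hgs : 0 ≤ ∑ j ∈ s, g j :=
      Finset.sum_nonneg fun j hj => hg j (Finset.mem_insert_of_mem hj)
    set piece := Ioc (c + ∑ j ∈ s, g j) (c + ∑ j ∈ s, g j + g i)
    have hupd : ∀ j ∈ s, Function.update A i piece j = A j := fun j hj =>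
      Function.update_of_ne (ne_of_mem_of_not_mem hj hi) _ _
    refine ⟨Function.update A i piece, ?_, ?_, ?_⟩
    · simp only [Finset.forall_mem_insert, Function.update_self]
      refine ⟨⟨measurableSet_Ioc, by simp [piece]⟩, fun j hj => hupd j hj ▸ hA j hj⟩
    · rw [Finset.coe_insert, pairwiseDisjoint_insert_of_notMem hi]
      refine ⟨fun j hj k hk hjk => ?_, fun j hj => ?_⟩
      · simpa only [Function.onFun, hupd j hj, hupd k hk] using hdisj hj hk hjk
      · rw [hupd j hj, Function.update_self]
        refine Disjoint.mono_right ?_ (Ioc_disjoint_Ioc_of_le (a := c) le_rfl).symm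
        rw [← hunion]; exact subset_biUnion_of_mem (u := A) hj
    · rw [Finset.set_biUnion_insert_update _ hi, hunion, Finset.sum_insert hi, union_comm,
        Ioc_union_Ioc_eq_Ioc (by linarith) (by linarith [hg i (Finset.mem_insert_self i s)]),
        add_comm (g i), add_assoc]

theorem exists_Ioc_partition_of_subset {s t : Finset ι} (hts : t ⊆ s)
    (g : ι → ℝ) (hg : ∀ i ∈ s, 0 ≤ g i) :
    ∃ A : ι → Set ℝ, (∀ i ∈ s, MeasurableSet (A i) ∧ volume (A i) = ENNReal.ofReal (g i)) ∧
      (s : Set ι).PairwiseDisjoint A ∧ ⋃ i ∈ s, A i = Ioc 0 (∑ i ∈ s, g i) ∧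
      ⋃ i ∈ t, A i = Ioc 0 (∑ i ∈ t, g i) := by
  obtain ⟨B, hB, hBdisj, hBunion⟩ := exists_Ioc_partition t g (fun i hi => hg i (hts hi)) 0
  obtain ⟨C, hC, hCdisj, hCunion⟩ :=
    exists_Ioc_partition (s \ t) g (fun i hi => hg i (Finset.sdiff_subset hi)) (∑ i ∈ t, g i)
  rw [zero_add] at hBunion
  rw [add_comm, Finset.sum_sdiff hts] at hCunion
  set A : ι → Set ℝ := fun i => if i ∈ t then B i else C i
  have hAt : ∀ i ∈ t, A i = B i := fun i hi => if_pos hi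
  have hAst : ∀ i ∈ s \ t, A i = C i := fun i hi => if_neg (Finset.mem_sdiff.mp hi).2
  have hunion_t : ⋃ i ∈ t, A i = Ioc 0 (∑ i ∈ t, g i) := hBunion ▸ iUnion₂_congr hAt
  have hunion_st : ⋃ i ∈ s \ t, A i = Ioc (∑ i ∈ t, g i) (∑ i ∈ s, g i) :=
    hCunion ▸ iUnion₂_congr hAst
  have hs : s = t ∪ s \ t := (Finset.union_sdiff_of_subset hts).symm
  refine ⟨A, fun i hi => ?_, ?_, ?_, hunion_t⟩
  · by_cases hit : i ∈ t
    · exact hAt i hit ▸ hB i hit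
    · exact hAst i (Finset.mem_sdiff.mpr ⟨hi, hit⟩) ▸ hC i (Finset.mem_sdiff.mpr ⟨hi, hit⟩)
  · rw [hs, Finset.coe_union]
    refine PairwiseDisjoint.union ?_ ?_ fun i hi j hj _ => ?_
    · exact hBdisj.mono_on fun i hi => (hAt i hi).le
    · exact hCdisj.mono_on fun i hi => (hAst i hi).le
    · have hAi : A i ⊆ Ioc 0 (∑ i ∈ t, g i) := hunion_t ▸ subset_biUnion_of_mem (u := A) hi
      have hAj : A j ⊆ Ioc (∑ i ∈ t, g i) (∑ i ∈ s, g i) :=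
        hunion_st ▸ subset_biUnion_of_mem (u := A) hj
      exact (Ioc_disjoint_Ioc_of_le le_rfl).mono hAi hAj
  · rw [hs, Finset.set_biUnion_union, ← hs, hunion_t, hunion_st]
    exact Ioc_union_Ioc_eq_Ioc (Finset.sum_nonneg fun i hi => hg i (hts hi))
      (Finset.sum_le_sum_of_subset_of_nonneg hts fun i hi _ => hg i hi)

end Partition

section Quantile

variable (μ : Measure ℝ)

theorem quantileFn_cdf_le_iff {u : ℝ} (hu : u ∈ Ioo (0 : ℝ) 1) (w : ℝ) :
    quantileFn (cdf μ) u ≤ w ↔ u ≤ cdf μ w := by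
  set S := {x | u ≤ cdf μ x}
  have hS : S.Nonempty := ((tendsto_cdf_atTop μ).eventually (eventually_ge_nhds hu.2)).exists
  have hSbdd : BddBelow S := by
    obtain ⟨x₀, hx₀⟩ := ((tendsto_cdf_atBot μ).eventually (eventually_lt_nhds hu.1)).exists
    exact ⟨x₀, fun x hx =>
      le_of_not_gt fun hxx₀ => (hx.trans (monotone_cdf μ hxx₀.le)).not_gt hx₀⟩
  refine ⟨fun h => le_trans ?_ (monotone_cdf μ h), fun h => csInf_le hSbdd h⟩
  -- `sInf S ∈ S` by right continuity of the cdf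
  refine ge_of_tendsto ((cdf μ).right_continuous _ |>.mono_left
    (nhdsWithin_mono _ Ioi_subset_Ici_self)) ?_
  filter_upwards [self_mem_nhdsWithin] with x hx
  obtain ⟨y, hy, hyx⟩ := exists_lt_of_csInf_lt hS hx
  exact hy.trans (monotone_cdf μ hyx.le)

theorem monotoneOn_quantileFn_cdf : MonotoneOn (quantileFn (cdf μ)) (Ioo 0 1) :=
  fun _ hu _ hv huv =>
    (quantileFn_cdf_le_iff μ hu _).mpr (huv.trans ((quantileFn_cdf_le_iff μ hv _).mp le_rfl))

theorem aemeasurable_quantileFn_cdf {A : Set ℝ} (hA : A ⊆ Ioc 0 1) :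
    AEMeasurable (quantileFn (cdf μ)) (volume.restrict A) := by
  refine AEMeasurable.mono_measure ?_ (Measure.restrict_mono hA le_rfl)
  rw [← Measure.restrict_congr_set Ioo_ae_eq_Ioc]
  exact aemeasurable_restrict_of_monotoneOn measurableSet_Ioo (monotoneOn_quantileFn_cdf μ)

theorem ae_quantileFn_cdf_le_iff :
    ∀ᵐ u ∂volume.restrict (Ioc 0 1), ∀ w, quantileFn (cdf μ) u ≤ w ↔ u ≤ cdf μ w := by
  rw [← Measure.restrict_congr_set Ioo_ae_eq_Ioc]
  exact ae_restrict_of_forall_mem measurableSet_Ioo fun u hu => quantileFn_cdf_le_iff μ hu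

theorem map_restrict_quantileFn_cdf_Iic {A : Set ℝ} (hA : A ⊆ Ioc 0 1) (w : ℝ) :
    (volume.restrict A).map (quantileFn (cdf μ)) (Iic w) = volume (Iic (cdf μ w) ∩ A) := by
  rw [Measure.map_apply_of_aemeasurable (aemeasurable_quantileFn_cdf μ hA) measurableSet_Iic,
    ← Measure.restrict_apply measurableSet_Iic]
  exact measure_congr <| (ae_restrict_of_ae_restrict_of_subset hA (ae_quantileFn_cdf_le_iff μ)).mono
    fun u hu => propext (hu w)

theorem map_quantileFn_cdf [IsProbabilityMeasure μ] :
    (volume.restrict (Ioc 0 1)).map (quantileFn (cdf μ)) = μ := by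
  refine Measure.ext_of_Iic _ _ fun w => ?_
  rw [map_restrict_quantileFn_cdf_Iic μ subset_rfl, Iic_inter_Ioc_of_le (cdf_le_one μ w),
    Real.volume_Ioc, sub_zero, ofReal_cdf]

theorem integrableOn_quantileFn_cdf [IsProbabilityMeasure μ] (hμ : Integrable id μ) :
    IntegrableOn (quantileFn (cdf μ)) (Ioc 0 1) := by
  rw [← map_quantileFn_cdf μ] at hμ
  exact (integrable_map_measure hμ.aestronglyMeasurable
    (aemeasurable_quantileFn_cdf μ subset_rfl)).mp hμ

end Quantile

/-- The conditional law of `quantileFn (cdf μ) U` given `U ∈ A`, for `U` uniform; when `A` is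
null that law is undefined and the Dirac mass at `0` stands in for it. -/
noncomputable def quantileCondLaw (μ : Measure ℝ) (A : Set ℝ) : Measure ℝ :=
  if volume A = 0 then Measure.dirac 0 else volume[|A].map (quantileFn (cdf μ))

section QuantileCondLaw

variable (μ : Measure ℝ) {A : Set ℝ}

theorem volume_smul_quantileCondLaw (hA : volume A ≠ ⊤) :
    volume A • quantileCondLaw μ A = (volume.restrict A).map (quantileFn (cdf μ)) := by
  unfold quantileCondLaw
  split_ifs with h
  · rw [h, zero_smul, Measure.restrict_eq_zero.mpr h, Measure.map_zero]
  · rw [← Measure.map_smul, ProbabilityTheory.cond, smul_smul,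
      ENNReal.mul_inv_cancel h hA, one_smul]

theorem isProbabilityMeasure_quantileCondLaw (hA : A ⊆ Ioc 0 1) :
    IsProbabilityMeasure (quantileCondLaw μ A) := by
  unfold quantileCondLaw
  split_ifs with h
  · infer_instance
  · have := cond_isProbabilityMeasure_of_finite h (measure_ne_top_of_subset hA (by simp))
    exact Measure.isProbabilityMeasure_map ((aemeasurable_quantileFn_cdf μ hA).smul_measure _)

theorem integrable_id_quantileCondLaw [IsProbabilityMeasure μ] (hμ : Integrable id μ)
    (hA : A ⊆ Ioc 0 1) : Integrable id (quantileCondLaw μ A) := by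
  unfold quantileCondLaw
  split_ifs with h
  · exact integrable_dirac (by simp)
  · refine (integrable_map_measure aestronglyMeasurable_id
      ((aemeasurable_quantileFn_cdf μ hA).smul_measure _)).mpr ?_
    exact ((integrableOn_quantileFn_cdf μ hμ).mono_set hA).smul_measure
      (ENNReal.inv_ne_top.mpr h)

theorem toReal_volume_mul_quantileCondLaw_Iic (hA : A ⊆ Ioc 0 1) (w : ℝ) :
    (volume A).toReal * (quantileCondLaw μ A (Iic w)).toReal =
      volume.real (Iic (cdf μ w) ∩ A) := by
  rw [← ENNReal.toReal_mul, ← smul_eq_mul, ← Measure.smul_apply,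
    volume_smul_quantileCondLaw μ (measure_ne_top_of_subset hA (by simp)),
    map_restrict_quantileFn_cdf_Iic μ hA, measureReal_def]

theorem toReal_volume_mul_integral_quantileCondLaw (hA : A ⊆ Ioc 0 1) :
    (volume A).toReal * ∫ x, x ∂quantileCondLaw μ A = ∫ u in A, quantileFn (cdf μ) u := by
  rw [← smul_eq_mul, ← integral_smul_measure,
    volume_smul_quantileCondLaw μ (measure_ne_top_of_subset hA (by simp)),
    integral_map (f := fun x => x) (aemeasurable_quantileFn_cdf μ hA) aestronglyMeasurable_id]

end QuantileCondLaw

section Mixture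

variable (μ : Measure ℝ) {ι : Type*} {s : Finset ι} {A : ι → Set ℝ}

theorem sum_toReal_volume_mul_quantileCondLaw_Iic (hA : ∀ i ∈ s, MeasurableSet (A i))
    (hdisj : (s : Set ι).PairwiseDisjoint A) (hunion : ⋃ i ∈ s, A i = Ioc 0 1) (w : ℝ) :
    ∑ i ∈ s, (volume (A i)).toReal * (quantileCondLaw μ (A i) (Iic w)).toReal = cdf μ w := by
  have hsub : ∀ i ∈ s, A i ⊆ Ioc 0 1 := fun i hi => hunion ▸ subset_biUnion_of_mem (u := A) hi
  calc ∑ i ∈ s, (volume (A i)).toReal * (quantileCondLaw μ (A i) (Iic w)).toReal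
      = ∑ i ∈ s, volume.real (Iic (cdf μ w) ∩ A i) :=
        Finset.sum_congr rfl fun i hi => toReal_volume_mul_quantileCondLaw_Iic μ (hsub i hi) w
    _ = volume.real (Iic (cdf μ w) ∩ Ioc 0 1) := by
        rw [← hunion, inter_iUnion₂, measureReal_biUnion_finset
          (hdisj.mono fun i => inter_subset_right) (fun i hi => measurableSet_Iic.inter (hA i hi))
          (fun i hi => measure_ne_top_of_subset (inter_subset_right.trans (hsub i hi)) (by simp))]
    _ = cdf μ w := by
        rw [Iic_inter_Ioc_of_le (cdf_le_one μ w), Real.volume_real_Ioc_of_le (cdf_nonneg μ w),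
          sub_zero]

theorem sum_toReal_volume_mul_integral_quantileCondLaw [IsProbabilityMeasure μ]
    (hμ : Integrable id μ) (hA : ∀ i ∈ s, MeasurableSet (A i))
    (hdisj : (s : Set ι).PairwiseDisjoint A)
    (hsub : ∀ i ∈ s, A i ⊆ Ioc 0 1) :
    ∑ i ∈ s, (volume (A i)).toReal * ∫ x, x ∂quantileCondLaw μ (A i)
      = ∫ u in ⋃ i ∈ s, A i, quantileFn (cdf μ) u := by
  rw [integral_biUnion_finset s hA hdisj
    fun i hi => (integrableOn_quantileFn_cdf μ hμ).mono_set (hsub i hi)]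
  exact Finset.sum_congr rfl fun i hi => toReal_volume_mul_integral_quantileCondLaw μ (hsub i hi)

end Mixture

theorem weighted_average_mixture_lower_bound_sharp_general
    {Ω : Type*} [MeasurableSpace Ω] (P : Measure Ω) [IsProbabilityMeasure P]
    (K : ℕ) (W : Ω → ℝ) (γ : ℕ → ℝ)
    (hWm : Measurable W) (hW : Integrable W P)
    (hγ : ∀ k ≤ K, 0 ≤ γ k) (hsum : ∑ k ∈ Finset.range (K + 1), γ k = 1)
    (l l' : ℕ) (hl'K : l' ≤ K) :
    ∃ ν : ℕ → Measure ℝ,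
      (∀ k ≤ K, IsProbabilityMeasure (ν k)) ∧
      (∀ k ≤ K, Integrable (fun x : ℝ => x) (ν k)) ∧
      (∀ w : ℝ, cdfOf P W w
          = ∑ k ∈ Finset.range (K + 1), γ k * (ν k (Set.Iic w)).toReal) ∧
      (∑ k ∈ Finset.Icc l l',
          (γ k / ∑ j ∈ Finset.Icc l l', γ j) * ∫ x, x ∂(ν k)
        = lowerTrunc (cdfOf P W) (∑ k ∈ Finset.Icc l l', γ k)) := by
  set μ := P.map W
  have : IsProbabilityMeasure μ := Measure.isProbabilityMeasure_map hWm.aemeasurable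
  have hcdf : cdfOf P W = cdf μ := funext fun w => by
    rw [cdfOf, cdf_eq_real, measureReal_def, Measure.map_apply hWm measurableSet_Iic]
    rfl
  have hμ : Integrable id μ :=
    (integrable_map_measure aestronglyMeasurable_id hWm.aemeasurable).mpr hW
  have hrange : ∀ {k}, k ∈ Finset.range (K + 1) ↔ k ≤ K := by simp
  have hblock : Finset.Icc l l' ⊆ Finset.range (K + 1) := fun k hk =>
    hrange.mpr ((Finset.mem_Icc.mp hk).2.trans hl'K)
  obtain ⟨A, hA, hdisj, hunion, hunion_block⟩ :=
    exists_Ioc_partition_of_subset hblock γ fun k hk => hγ k (hrange.mp hk)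
  rw [hsum] at hunion
  have hsub : ∀ k ≤ K, A k ⊆ Ioc 0 1 := fun k hk =>
    hunion ▸ subset_biUnion_of_mem (u := A) (hrange.mpr hk)
  have hvol : ∀ k ≤ K, (volume (A k)).toReal = γ k := fun k hk => by
    rw [(hA k (hrange.mpr hk)).2, ENNReal.toReal_ofReal (hγ k hk)]
  refine ⟨fun k => quantileCondLaw μ (A k),
    fun k hk => isProbabilityMeasure_quantileCondLaw μ (hsub k hk),
    fun k hk => integrable_id_quantileCondLaw μ hμ (hsub k hk), fun w => ?_, ?_⟩
  · rw [hcdf,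
      ← sum_toReal_volume_mul_quantileCondLaw_Iic μ (fun k hk => (hA k hk).1) hdisj hunion w]
    exact Finset.sum_congr rfl fun k hk => by rw [hvol k (hrange.mp hk)]
  · rw [lowerTrunc, hcdf, ← hunion_block, ← sum_toReal_volume_mul_integral_quantileCondLaw μ hμ
      (fun k hk => (hA k (hblock hk)).1) (hdisj.subset (Finset.coe_subset.mpr hblock))
      (fun k hk => hsub k (hrange.mp (hblock hk))), Finset.mul_sum]
    refine Finset.sum_congr rfl fun k hk => ?_
    rw [hvol k (hrange.mp (hblock hk))]
    ring

/-- sharpness of the weighted-average mixture lower bound: for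
any integrable `W`, nonnegative weights `γ_0,…,γ_K` summing to one and
`l ≤ l' ≤ K` with `γ̄ := Σ_{k=l}^{l'} γ_k > 0`, there exist distributions
(probability measures on `ℝ` with finite mean) `ν_0,…,ν_K` whose CDFs mix to
`F_W` and whose weighted average of means attains the lower truncated mean
`E[F_W⁻¹(U) | U ≤ γ̄]`. -/
theorem weighted_average_mixture_lower_bound_sharp
    {Ω : Type*} [MeasurableSpace Ω] (P : Measure Ω) [IsProbabilityMeasure P]
    (K : ℕ) (W : Ω → ℝ) (γ : ℕ → ℝ)
    (hWm : Measurable W) (hW : Integrable W P)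
    (hγ : ∀ k ≤ K, 0 ≤ γ k) (hsum : ∑ k ∈ Finset.range (K + 1), γ k = 1)
    (l l' : ℕ) (hll' : l ≤ l') (hl'K : l' ≤ K)
    (hγbar : 0 < ∑ k ∈ Finset.Icc l l', γ k) :
    ∃ ν : ℕ → Measure ℝ,
      (∀ k ≤ K, IsProbabilityMeasure (ν k)) ∧
      (∀ k ≤ K, Integrable (fun x : ℝ => x) (ν k)) ∧
      (∀ w : ℝ, cdfOf P W w
          = ∑ k ∈ Finset.range (K + 1), γ k * (ν k (Set.Iic w)).toReal) ∧
      (∑ k ∈ Finset.Icc l l',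
          (γ k / ∑ j ∈ Finset.Icc l l', γ j) * ∫ x, x ∂(ν k)
        = lowerTrunc (cdfOf P W) (∑ k ∈ Finset.Icc l l', γ k)) :=
  weighted_average_mixture_lower_bound_sharp_general P K W γ hWm hW hγ hsum l l' hl'K
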